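/- Let A be a finite set, let H ⊆ A × A be the edge set of a directed graph on A, and let C ⊆ H be a maximal child of H. Then C contains every bridge edge of H, and for every strongly connected component S of H the set C ∩ (S × S) is a maximal child of the edge set H ∩ (S × S); moreover C equals the union of the bridge edges of H and the sets C ∩ (S × S) over all strongly connected components S of H. -/

import Mathlib

/-- The edge relation of an edge set `E ⊆ A × A`. -/
def EdgeRel {A : Type*} (E : Set (A × A)) : A → A → Prop := fun u v => (u, v) ∈ E

/-- An edge set is acyclic if no vertex has a path of length ≥ 1 back to itself. -/
def AcyclicEdges {A : Type*} (E : Set (A × A)) : Prop :=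
  ∀ a : A, ¬ Relation.TransGen (EdgeRel E) a a

/-- Two vertices are strongly connected in `E` if they are equal or there are paths
of length ≥ 1 both ways. -/
def StronglyConn {A : Type*} (E : Set (A × A)) (u v : A) : Prop :=
  u = v ∨ (Relation.TransGen (EdgeRel E) u v ∧ Relation.TransGen (EdgeRel E) v u)

/-- `S` is a strongly connected component of `E`: an equivalence class of the
strongly-connected relation. -/
def IsSCC {A : Type*} (E : Set (A × A)) (S : Set A) : Prop :=
  ∃ a : A, S = {b : A | StronglyConn E a b}

/-- The bridge edges of `E`: edges whose endpoints are not strongly connected in `E`. -/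
def BridgeEdges {A : Type*} (E : Set (A × A)) : Set (A × A) :=
  {e | e ∈ E ∧ ¬ StronglyConn E e.1 e.2}

/-- `C` is a maximal child of the directed graph with edge set `H`. -/
def MaximalChild {A : Type*} (H C : Set (A × A)) : Prop :=
  C ⊆ H ∧ AcyclicEdges C ∧ ∀ e ∈ H \ C, ¬ AcyclicEdges (C ∪ {e})

/-! Adding an edge `(u, v)` to an acyclic `C` creates a cycle exactly when `C` already has a
path from `v` to `u`. For a maximal child `C` of `H` this applies to every edge of `H \ C`:
its endpoints are strongly connected in `H`, so every bridge of `H` lies in `C`; and the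
path of `C` closing the cycle stays inside the strongly connected component of the edge,
so the cycle survives the restriction to that component. -/

section

open Relation

variable {A : Type*}

lemma EdgeRel.mono {E F : Set (A × A)} (h : E ⊆ F) : EdgeRel E ≤ EdgeRel F :=
  fun _ _ huv => h huv

namespace StronglyConn

variable {E : Set (A × A)} {a b c : A}

lemma symm (h : StronglyConn E a b) : StronglyConn E b a := by
  rcases h with rfl | ⟨hab, hba⟩
  exacts [Or.inl rfl, Or.inr ⟨hba, hab⟩]

lemma trans (hab : StronglyConn E a b) (hbc : StronglyConn E b c) : StronglyConn E a c := by
  rcases hab with rfl | ⟨hab, hba⟩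
  · exact hbc
  rcases hbc with rfl | ⟨hbc, hcb⟩
  · exact Or.inr ⟨hab, hba⟩
  · exact Or.inr ⟨hab.trans hbc, hcb.trans hba⟩

lemma reflTransGen (h : StronglyConn E a b) : ReflTransGen (EdgeRel E) a b := by
  rcases h with rfl | ⟨hab, -⟩
  exacts [.refl, hab.to_reflTransGen]

lemma of_reflTransGen (hab : ReflTransGen (EdgeRel E) a b)
    (hba : ReflTransGen (EdgeRel E) b a) : StronglyConn E a b := by
  rcases reflTransGen_iff_eq_or_transGen.mp hab with rfl | hab
  · exact Or.inl rfl
  rcases reflTransGen_iff_eq_or_transGen.mp hba with rfl | hba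
  · exact Or.inl rfl
  · exact Or.inr ⟨hab, hba⟩

end StronglyConn

lemma AcyclicEdges.mono {C D : Set (A × A)} (hCD : C ⊆ D) (hD : AcyclicEdges D) :
    AcyclicEdges C :=
  fun a h => hD a (TransGen.mono (EdgeRel.mono hCD) _ _ h)

lemma transGen_edgeRel_union_singleton {C : Set (A × A)} {u v x y : A}
    (h : TransGen (EdgeRel (C ∪ {(u, v)})) x y) :
    TransGen (EdgeRel C) x y ∨
      (ReflTransGen (EdgeRel C) x u ∧ ReflTransGen (EdgeRel C) v y) := by
  induction h with
  | single h =>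
    rcases h with h | h
    · exact Or.inl (.single h)
    · obtain ⟨rfl, rfl⟩ := Prod.mk.inj h
      exact Or.inr ⟨.refl, .refl⟩
  | tail _ hby ih =>
    rcases hby with hby | hby
    · rcases ih with ih | ⟨hxu, hvb⟩
      · exact Or.inl (ih.tail hby)
      · exact Or.inr ⟨hxu, hvb.tail hby⟩
    · obtain ⟨rfl, rfl⟩ := Prod.mk.inj hby
      rcases ih with ih | ⟨hxu, -⟩
      · exact Or.inr ⟨ih.to_reflTransGen, .refl⟩
      · exact Or.inr ⟨hxu, .refl⟩

lemma AcyclicEdges.reflTransGen_of_not_acyclicEdges_union_singleton {C : Set (A × A)} {u v : A}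
    (hC : AcyclicEdges C) (h : ¬ AcyclicEdges (C ∪ {(u, v)})) :
    ReflTransGen (EdgeRel C) v u := by
  obtain ⟨a, ha⟩ := not_forall_not.mp h
  rcases transGen_edgeRel_union_singleton ha with ha | ⟨hau, hva⟩
  exacts [absurd ha (hC a), hva.trans hau]

lemma IsSCC.reflTransGen_edgeRel_inter_prod {H C : Set (A × A)} {S : Set A} (hS : IsSCC H S)
    (hCH : C ⊆ H) {x u : A} (hxu : ReflTransGen (EdgeRel C) x u) (hx : x ∈ S) (hu : u ∈ S) :
    ReflTransGen (EdgeRel (C ∩ S ×ˢ S)) x u := by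
  obtain ⟨a, rfl⟩ := hS
  induction hxu using ReflTransGen.head_induction_on with
  | refl => exact .refl
  | @head x b hxb hbu ih =>
    -- `b` lies on the closed walk `x → b ⇝ u ⇝ x` of `H`
    have hux : ReflTransGen (EdgeRel H) u x := (StronglyConn.trans hu.symm hx).reflTransGen
    have hbx : ReflTransGen (EdgeRel H) b x :=
      (ReflTransGen.mono (EdgeRel.mono hCH) _ _ hbu).trans hux
    have hb : StronglyConn H a b :=
      hx.trans (.of_reflTransGen (.single (hCH hxb)) hbx)
    exact .head ⟨hxb, hx, hb⟩ (ih hb)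

namespace MaximalChild

variable {H C : Set (A × A)}

lemma reflTransGen_of_mem_diff (hC : MaximalChild H C) {u v : A} (he : (u, v) ∈ H \ C) :
    ReflTransGen (EdgeRel C) v u :=
  hC.2.1.reflTransGen_of_not_acyclicEdges_union_singleton (hC.2.2 _ he)

lemma bridgeEdges_subset (hC : MaximalChild H C) : BridgeEdges H ⊆ C := by
  rintro ⟨u, v⟩ ⟨huv, hnsc⟩
  by_contra huvC
  have hvu := ReflTransGen.mono (EdgeRel.mono hC.1) _ _
    (hC.reflTransGen_of_mem_diff ⟨huv, huvC⟩)
  exact hnsc (.of_reflTransGen (.single huv) hvu)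

lemma inter_prod (hC : MaximalChild H C) {S : Set A} (hS : IsSCC H S) :
    MaximalChild (H ∩ S ×ˢ S) (C ∩ S ×ˢ S) := by
  refine ⟨Set.inter_subset_inter_left _ hC.1, hC.2.1.mono Set.inter_subset_left, ?_⟩
  rintro ⟨u, v⟩ ⟨⟨huv, hu, hv⟩, huvC⟩
  have hvu := hS.reflTransGen_edgeRel_inter_prod hC.1
    (hC.reflTransGen_of_mem_diff ⟨huv, fun h => huvC ⟨h, hu, hv⟩⟩) hv hu
  exact fun hacyc => hacyc u <|
    .head' (Or.inr rfl) (ReflTransGen.mono (EdgeRel.mono Set.subset_union_left) _ _ hvu)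

end MaximalChild

lemma eq_bridgeEdges_union_biUnion_inter_prod {H C : Set (A × A)} (hCH : C ⊆ H)
    (hbr : BridgeEdges H ⊆ C) :
    C = BridgeEdges H ∪ ⋃ S ∈ {S : Set A | IsSCC H S}, C ∩ S ×ˢ S := by
  refine subset_antisymm ?_
    (Set.union_subset hbr (Set.iUnion₂_subset fun _ _ => Set.inter_subset_left))
  rintro ⟨u, v⟩ huv
  by_cases hsc : StronglyConn H u v
  · exact Or.inr <|
      Set.mem_biUnion (x := {b | StronglyConn H u b}) ⟨u, rfl⟩ ⟨huv, Or.inl rfl, hsc⟩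
  · exact Or.inl ⟨hCH huv, hsc⟩

end

theorem maximalChild_contains_bridges_and_restricts_general {A : Type*}
    (H C : Set (A × A)) (hC : MaximalChild H C) :
    BridgeEdges H ⊆ C ∧
      (∀ S : Set A, IsSCC H S → MaximalChild (H ∩ S ×ˢ S) (C ∩ S ×ˢ S)) ∧
      C = BridgeEdges H ∪ ⋃ S ∈ {S : Set A | IsSCC H S}, C ∩ S ×ˢ S :=
  ⟨hC.bridgeEdges_subset, fun _ hS => hC.inter_prod hS,
    eq_bridgeEdges_union_biUnion_inter_prod hC.1 hC.bridgeEdges_subset⟩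

theorem maximalChild_contains_bridges_and_restricts {A : Type*} [Fintype A]
    (H C : Set (A × A)) (hC : MaximalChild H C) :
    BridgeEdges H ⊆ C ∧
      (∀ S : Set A, IsSCC H S → MaximalChild (H ∩ S ×ˢ S) (C ∩ S ×ˢ S)) ∧
      C = BridgeEdges H ∪ ⋃ S ∈ {S : Set A | IsSCC H S}, C ∩ S ×ˢ S :=
  maximalChild_contains_bridges_and_restricts_general H C hC
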